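/- Let λ₁ > 0, λ₂ > 0, α > 0 and θ ∈ [-1, 1], let D = λ₂α/(λ₁+λ₂α) + θλ₁·(2/(2λ₁+λ₂α) + 1/(λ₁+2λ₂α) - 2/(λ₁+λ₂α)), K = λ₁/D, and set p₁ = K/λ₁, p₂ = -K(1+θ)/(λ₁+λ₂α), p₃ = 2Kθ/(2λ₁+λ₂α), p₄ = Kθ/(λ₁+2λ₂α), p₅ = -Kθ/(λ₁+λ₂α). Then for every x > 0, K e^{-λ₁x}(1 - e^{-λ₂αx})(1 - θe^{-λ₂αx}(1 - 2e^{-λ₁x})) = p₁λ₁e^{-λ₁x} + p₂(λ₁+λ₂α)e^{-(λ₁+λ₂α)x} + p₃(2λ₁+λ₂α)e^{-(2λ₁+λ₂α)x} + p₄(λ₁+2λ₂α)e^{-(λ₁+2λ₂α)x} + p₅·2(λ₁+λ₂α)e^{-2(λ₁+λ₂α)x}. -/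
import Mathlib

open Real

theorem gwed_mixture_representation
    (l₁ l₂ α θ : ℝ) (hl₁ : 0 < l₁) (hl₂ : 0 < l₂) (hα : 0 < α)
    (hθ : θ ∈ Set.Icc (-1 : ℝ) 1)
    (D K p₁ p₂ p₃ p₄ p₅ : ℝ)
    (hD : D = l₂ * α / (l₁ + l₂ * α)
        + θ * l₁ * (2 / (2 * l₁ + l₂ * α) + 1 / (l₁ + 2 * l₂ * α)
          - 2 / (l₁ + l₂ * α)))
    (hK : K = l₁ / D)
    (hp₁ : p₁ = K / l₁)
    (hp₂ : p₂ = -(K * (1 + θ)) / (l₁ + l₂ * α))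
    (hp₃ : p₃ = 2 * K * θ / (2 * l₁ + l₂ * α))
    (hp₄ : p₄ = K * θ / (l₁ + 2 * l₂ * α))
    (hp₅ : p₅ = -(K * θ) / (l₁ + l₂ * α)) :
    ∀ x : ℝ, 0 < x →
      K * Real.exp (-l₁ * x) * (1 - Real.exp (-l₂ * α * x))
          * (1 - θ * Real.exp (-l₂ * α * x) * (1 - 2 * Real.exp (-l₁ * x)))
        = p₁ * (l₁ * Real.exp (-l₁ * x))
          + p₂ * ((l₁ + l₂ * α) * Real.exp (-(l₁ + l₂ * α) * x))
          + p₃ * ((2 * l₁ + l₂ * α) * Real.exp (-(2 * l₁ + l₂ * α) * x))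
          + p₄ * ((l₁ + 2 * l₂ * α) * Real.exp (-(l₁ + 2 * l₂ * α) * x))
          + p₅ * (2 * (l₁ + l₂ * α) * Real.exp (-(2 * (l₁ + l₂ * α)) * x)) := by
  intro x hx
  have hc : 0 < l₂ * α := mul_pos hl₂ hα
  have h1 : l₁ + l₂ * α ≠ 0 := by positivity
  have h2 : 2 * l₁ + l₂ * α ≠ 0 := by positivity
  have h3 : l₁ + 2 * (l₂ * α) ≠ 0 := by positivity
  have h3' : l₁ + 2 * l₂ * α ≠ 0 := by positivity
  have hl₁' : l₁ ≠ 0 := ne_of_gt hl₁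
  set a := Real.exp (-l₁ * x) with ha
  set b := Real.exp (-l₂ * α * x) with hb
  have e2 : Real.exp (-(l₁ + l₂ * α) * x) = a * b := by
    rw [ha, hb, ← Real.exp_add]; ring_nf
  have e3 : Real.exp (-(2 * l₁ + l₂ * α) * x) = a * a * b := by
    rw [ha, hb, ← Real.exp_add, ← Real.exp_add]; ring_nf
  have e4 : Real.exp (-(l₁ + 2 * l₂ * α) * x) = a * b * b := by
    rw [ha, hb, ← Real.exp_add, ← Real.exp_add]; ring_nf
  have e5 : Real.exp (-(2 * (l₁ + l₂ * α)) * x) = a * a * b * b := by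
    rw [ha, hb, ← Real.exp_add, ← Real.exp_add, ← Real.exp_add]; ring_nf
  rw [e2, e3, e4, e5, hp₁, hp₂, hp₃, hp₄, hp₅]
  field_simp
  ring
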